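/- Let γ : X → ℂ be a fixed generalized path, and define L(x,t,μ) = L^{x,t,μ}(γ). Then the function L(x,t,μ) from [0,1] × [0,1] × (0,1] to ℝ is lower semicontinuous (hence Borel measurable and Lebesgue integrable). -/

import Mathlib

/-!
Fix `(x, t, μ)` with `μ > 0` and `y < L^{x,t,μ}(γ)`; some finite family of distinct components
`C₀, …, C_{N-1}` of strip preimages already has weighted sum `> y`. For nearby parameters
`(x', t', μ')` the map `proj⊥_{t'} ∘ γ` is uniformly close to `proj⊥_t ∘ γ` and the strip
boundaries move little, so the continuum `Cₙ` contains a subcontinuum on which `proj⊥_{t'} ∘ γ`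
sweeps an interval of length `‖γ(Cₙ)‖_t - η` inside the new strip; the new component `C'ₙ`
containing it has `‖γ(C'ₙ)‖_{t'} ≥ ‖γ(Cₙ)‖_t - η`. The `C'ₙ` are distinct: two strips meet in a
line, and two distinct components of a compact level set `f⁻¹[a, b]` are not joined by any
connected subset of `f⁻¹[a - δ, b + δ]` for small `δ`, because a decreasing intersection of
continua is a continuum. Since `L^{x,t,μ}(γ) ≤ 2μ`, lower semicontinuity gives integrability.
-/

open Set MeasureTheory

noncomputable section

/-- The closed horizontal strip `S_j = {a + ib : a ∈ ℝ, b ∈ [j, j+1]} ⊆ ℂ`. -/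
def hStrip (j : ℤ) : Set ℂ := {z : ℂ | (j : ℝ) ≤ z.im ∧ z.im ≤ (j : ℝ) + 1}

/-- The strip `S^{x,t,μ}_j = μ·e^{tπi}·(S_j + ix)`. -/
def Strip (x t μ : ℝ) (j : ℤ) : Set ℂ :=
  (fun z : ℂ => (μ : ℂ) * Complex.exp ((t : ℂ) * (Real.pi : ℂ) * Complex.I) *
    (z + (x : ℂ) * Complex.I)) '' hStrip j

/-- The orthogonal projection of `ℂ` onto the line `{r·e^{(t+1/2)πi} : r ∈ ℝ}`,
composed with the natural isometric identification of this line with `ℝ`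
(so that Euclidean diameters of subsets are preserved). -/
def projPerp (t : ℝ) (z : ℂ) : ℝ :=
  (z * Complex.exp (-(((t : ℂ) + 1 / 2) * (Real.pi : ℂ) * Complex.I))).re

/-- `‖A‖_t`, the (Euclidean) diameter of the orthogonal projection `proj⊥_t(A)`. -/
def normT (t : ℝ) (A : Set ℂ) : ℝ := Metric.diam (projPerp t '' A)

/-- The collection of all connected components of the sets `γ⁻¹(S^{x,t,μ}_j)`, `j ∈ ℤ`. -/
def stripComponents {X : Type*} [TopologicalSpace X] (γ : X → ℂ) (x t μ : ℝ) : Set (Set X) :=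
  {C | ∃ j : ℤ, ∃ p ∈ γ ⁻¹' Strip x t μ j, C = connectedComponentIn (γ ⁻¹' Strip x t μ j) p}

/-- The components whose image under `proj⊥_t ∘ γ` is non-degenerate. -/
def ndComponents {X : Type*} [TopologicalSpace X] (γ : X → ℂ) (x t μ : ℝ) : Set (Set X) :=
  {C | C ∈ stripComponents γ x t μ ∧ (projPerp t '' (γ '' C)).Nontrivial}

/-- `L^{x,t,μ}(γ) = ∑ₙ ‖γ(C_n)‖_t / 2ⁿ`, where `⟨C_n⟩ₙ` enumerates the components of
the sets `γ⁻¹(S^{x,t,μ}_j)` (`j ∈ ℤ`) with non-degenerate projection, in non-increasing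
order of `‖γ(C_n)‖_t`.  Since the weights `2⁻ⁿ` are strictly decreasing, this sum is equal
to the supremum, over all finite injective enumerations `e` of such components, of
`∑ₙ ‖γ(e n)‖_t / 2ⁿ`; we take this supremum as the formal definition. -/
def Lfn {X : Type*} [TopologicalSpace X] (γ : X → ℂ) (x t μ : ℝ) : ℝ :=
  sSup {r : ℝ | ∃ (N : ℕ) (e : Fin N → Set X), Function.Injective e ∧
    (∀ n, e n ∈ ndComponents γ x t μ) ∧
    r = ∑ n : Fin N, normT t (γ '' e n) / (2 : ℝ) ^ (n : ℕ)}

/-- `len(γ) = ∫₀¹∫₀¹∫₀¹ L^{x,t,μ}(γ) dx dt dμ`. -/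
def len {X : Type*} [TopologicalSpace X] (γ : X → ℂ) : ℝ :=
  ∫ μ in (0:ℝ)..1, ∫ t in (0:ℝ)..1, ∫ x in (0:ℝ)..1, Lfn γ x t μ

open Filter Topology Metric

section ConnectedComponents

variable {X : Type*} [TopologicalSpace X]

theorem isClosed_connectedComponentIn {F : Set X} (hF : IsClosed F) (x : X) :
    IsClosed (connectedComponentIn F x) := by
  by_cases hx : x ∈ F
  · refine isClosed_of_closure_subset ?_
    exact isPreconnected_connectedComponentIn.closure.subset_connectedComponentIn
      (subset_closure (mem_connectedComponentIn hx))
      (closure_minimal (connectedComponentIn_subset F x) hF)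
  · rw [connectedComponentIn_eq_empty hx]
    exact isClosed_empty

theorem isPreconnected_iInter_of_directed [T2Space X] {ι : Type*} [Nonempty ι] {K : ι → Set X}
    (hK : Directed (· ⊇ ·) K) (hc : ∀ i, IsCompact (K i)) (hp : ∀ i, IsPreconnected (K i)) :
    IsPreconnected (⋂ i, K i) := by
  have hclosed : IsClosed (⋂ i, K i) := isClosed_iInter fun i => (hc i).isClosed
  rw [isPreconnected_iff_subset_of_fully_disjoint_closed hclosed]
  intro u v hu hv huv hdisj
  have hcK : IsCompact (⋂ i, K i) := (hc (Classical.arbitrary ι)).of_isClosed_subset hclosed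
    (iInter_subset _ _)
  obtain ⟨U, V, hU, hV, huU, hvV, hUV⟩ := SeparatedNhds.of_isCompact_isCompact
    (hcK.inter_right hu) (hcK.inter_right hv) (hdisj.mono inter_subset_right inter_subset_right)
  have hsub : ⋂ i, K i ⊆ U ∪ V := fun z hz =>
    (huv hz).imp (fun hzu => huU ⟨hz, hzu⟩) (fun hzv => hvV ⟨hz, hzv⟩)
  obtain ⟨i, hi⟩ := exists_subset_nhds_of_isCompact' hK hc (fun i => (hc i).isClosed)
    fun z hz => (hU.union hV).mem_nhds (hsub hz)
  rcases (hp i).subset_or_subset hU hV hUV hi with hiU | hiV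
  · left
    intro z hz
    refine (huv hz).resolve_right fun hzv => hUV.le_bot ⟨?_, hvV ⟨hz, hzv⟩⟩
    exact hiU (iInter_subset K i hz)
  · right
    intro z hz
    refine (huv hz).resolve_left fun hzu => hUV.le_bot ⟨huU ⟨hz, hzu⟩, ?_⟩
    exact hiV (iInter_subset K i hz)

theorem mem_connectedComponentIn_iInter [T2Space X] {ι : Type*} [Nonempty ι] {F : ι → Set X}
    (hF : Directed (· ⊇ ·) F) (hc : ∀ i, IsCompact (F i)) {p q : X}
    (hq : ∀ i, q ∈ connectedComponentIn (F i) p) : q ∈ connectedComponentIn (⋂ i, F i) p := by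
  have hp : ∀ i, p ∈ connectedComponentIn (F i) p := fun i =>
    mem_connectedComponentIn (connectedComponentIn_nonempty_iff.1 ⟨q, hq i⟩)
  have hD : IsPreconnected (⋂ i, connectedComponentIn (F i) p) := by
    refine isPreconnected_iInter_of_directed ?_ (fun i => ?_) fun i =>
      isPreconnected_connectedComponentIn
    · exact hF.mono_comp (· ⊇ ·) (g := (connectedComponentIn · p)) fun _ _ h =>
        connectedComponentIn_mono p h
    · exact (hc i).of_isClosed_subset (isClosed_connectedComponentIn (hc i).isClosed p)
        (connectedComponentIn_subset _ _)
  exact hD.subset_connectedComponentIn (mem_iInter.2 hp)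
    (iInter_mono fun i => connectedComponentIn_subset _ _) (mem_iInter.2 hq)

theorem exists_isClopen_of_forall_disjoint_connectedComponent [CompactSpace X] [T2Space X]
    {A B : Set X} (hA : IsClosed A) (hB : IsClosed B)
    (h : ∀ a ∈ A, Disjoint (connectedComponent a) B) :
    ∃ U, IsClopen U ∧ A ⊆ U ∧ Disjoint U B := by
  refine hA.isCompact.induction_on ⟨∅, isClopen_empty, subset_rfl, empty_disjoint B⟩
    (fun s t hst ⟨U, hU, htU, hUB⟩ => ⟨U, hU, hst.trans htU, hUB⟩)
    (fun s t ⟨U, hU, hsU, hUB⟩ ⟨V, hV, htV, hVB⟩ =>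
      ⟨U ∪ V, hU.union hV, union_subset_union hsU htV, hUB.union_left hVB⟩) ?_
  intro a ha
  have hinter : B ∩ ⋂ s : {s : Set X // IsClopen s ∧ a ∈ s}, s.1 = ∅ := by
    rw [← connectedComponent_eq_iInter_isClopen, inter_comm, ← disjoint_iff_inter_eq_empty]
    exact h a ha
  obtain ⟨u, hu⟩ := hB.isCompact.elim_finite_subfamily_closed _ (fun s => s.2.1.isClosed) hinter
  have hV : IsClopen (⋂ s ∈ u, s.1) := isClopen_biInter_finset fun s _ => s.2.1
  refine ⟨⋂ s ∈ u, s.1, mem_nhdsWithin_of_mem_nhds (hV.isOpen.mem_nhds ?_), _, hV, subset_rfl, ?_⟩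
  · exact mem_iInter₂.2 fun s _ => s.2.2
  · rw [disjoint_iff_inter_eq_empty, inter_comm, hu]

theorem IsPreconnected.exists_isPreconnected_image_eq_Icc [T2Space X] {K : Set X}
    (hK : IsCompact K) (hKc : IsPreconnected K) {g : X → ℝ} (hg : ContinuousOn g K) {c d : ℝ}
    (hcd : c < d) {p₀ p₁ : X} (h₀ : p₀ ∈ K) (h₁ : p₁ ∈ K) (hg₀ : g p₀ ≤ c) (hg₁ : d ≤ g p₁) :
    ∃ L ⊆ K, IsPreconnected L ∧ g '' L = Icc c d := by
  set M := K ∩ g ⁻¹' Icc c d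
  have hMc : IsClosed M := hg.preimage_isClosed_of_isClosed hK.isClosed isClosed_Icc
  have : CompactSpace M :=
    isCompact_iff_compactSpace.1 (hK.of_isClosed_subset hMc inter_subset_left)
  have hgM : Continuous (M.domRestrict g) := (hg.mono inter_subset_left).domRestrict
  suffices ∃ a : M, g a = c ∧ ∃ b ∈ connectedComponent a, g b = d by
    obtain ⟨a, ha, b, hb, hb'⟩ := this
    have hL : IsPreconnected (((↑) : M → X) '' connectedComponent a) :=
      isPreconnected_connectedComponent.image _ continuous_subtype_val.continuousOn
    have hLK : ((↑) : M → X) '' connectedComponent a ⊆ K := by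
      rintro _ ⟨m, -, rfl⟩
      exact m.2.1
    refine ⟨_, hLK, hL, Subset.antisymm ?_ ?_⟩
    · rintro _ ⟨_, ⟨m, -, rfl⟩, rfl⟩
      exact m.2.2
    exact (hL.image g (hg.mono hLK)).Icc_subset
      ⟨a, ⟨a, mem_connectedComponent, rfl⟩, ha⟩ ⟨b, ⟨b, hb, rfl⟩, hb'⟩
  by_contra! hno
  obtain ⟨U, hU, hAU, hUB⟩ := exists_isClopen_of_forall_disjoint_connectedComponent
    (isClosed_singleton.preimage hgM) (isClosed_singleton.preimage hgM)
    fun a ha => disjoint_left.2 fun b hb hbd => hno a ha b hb hbd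
  -- otherwise `K` splits into the disjoint closed sets `{g ≤ c} ∪ U` and `{g ≥ d} ∪ (M \ U)`
  have hE₁ : IsClosed ((K ∩ g ⁻¹' Iic c) ∪ (↑) '' U) :=
    (hg.preimage_isClosed_of_isClosed hK.isClosed isClosed_Iic).union
      (hU.isClosed.isCompact.image continuous_subtype_val).isClosed
  have hE₂ : IsClosed ((K ∩ g ⁻¹' Ici d) ∪ (↑) '' Uᶜ) :=
    (hg.preimage_isClosed_of_isClosed hK.isClosed isClosed_Ici).union
      (hU.compl.isClosed.isCompact.image continuous_subtype_val).isClosed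
  have hcover : K ⊆ ((K ∩ g ⁻¹' Iic c) ∪ (↑) '' U) ∪ ((K ∩ g ⁻¹' Ici d) ∪ (↑) '' Uᶜ) := by
    intro z hz
    by_cases hzc : g z ≤ c
    · exact Or.inl (Or.inl ⟨hz, hzc⟩)
    by_cases hzd : d ≤ g z
    · exact Or.inr (Or.inl ⟨hz, hzd⟩)
    have hzM : z ∈ M := ⟨hz, (not_le.1 hzc).le, (not_le.1 hzd).le⟩
    by_cases hzU : (⟨z, hzM⟩ : M) ∈ U
    · exact Or.inl (Or.inr ⟨_, hzU, rfl⟩)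
    · exact Or.inr (Or.inr ⟨_, hzU, rfl⟩)
  obtain ⟨z, -, hz₁, hz₂⟩ := isPreconnected_closed_iff.1 hKc _ _ hE₁ hE₂ hcover
    ⟨p₀, h₀, Or.inl ⟨h₀, hg₀⟩⟩ ⟨p₁, h₁, Or.inl ⟨h₁, hg₁⟩⟩
  rcases hz₁ with ⟨-, hzc⟩ | ⟨m, hmU, rfl⟩ <;> rcases hz₂ with ⟨-, hzd⟩ | ⟨m', hm'U, hm'⟩
  · exact absurd (hzc.trans_lt hcd) (not_lt.2 hzd)
  · subst hm'
    exact hm'U (hAU (le_antisymm hzc m'.2.2.1))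
  · exact disjoint_left.1 hUB hmU (le_antisymm m.2.2.2 hzd)
  · exact hm'U (Subtype.val_injective hm' ▸ hmU)

end ConnectedComponents

theorem LowerSemicontinuousOn.integrableOn_of_bounded {α : Type*} [TopologicalSpace α]
    [MeasurableSpace α] [OpensMeasurableSpace α] {μ : Measure α} {f : α → ℝ} {s : Set α}
    (hf : LowerSemicontinuousOn f s) (hs : MeasurableSet s) (hμs : μ s ≠ ⊤) {M : ℝ}
    (hM : ∀ x ∈ s, |f x| ≤ M) : IntegrableOn f s μ := by
  have hmeas : Measurable fun x : s => f x := (lowerSemicontinuous_restrict_iff.2 hf).measurable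
  exact ⟨(aemeasurable_restrict_of_measurable_subtype hs hmeas).aestronglyMeasurable,
    .restrict_of_bounded M hμs.lt_top (ae_restrict_of_forall_mem hs hM)⟩

theorem iInter_Icc_sub_add (a b : ℝ) : ⋂ δ : Ioi (0 : ℝ), Icc (a - δ) (b + δ) = Icc a b := by
  ext z
  simp only [mem_iInter, mem_Icc, Subtype.forall, mem_Ioi]
  refine ⟨fun h => ⟨le_of_forall_pos_le_add fun δ hδ => ?_, le_of_forall_pos_le_add fun δ hδ =>
    (h δ hδ).2⟩, fun h δ hδ => ⟨by linarith [h.1], by linarith [h.2]⟩⟩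
  linarith [(h δ hδ).1]

section LevelSets

variable {X : Type*} [TopologicalSpace X] [CompactSpace X] [T2Space X] {f g : X → ℝ}

theorem eventually_disjoint_connectedComponentIn_preimage_Icc (hf : Continuous f)
    {a b : ℝ} {p q : X}
    (hpq : connectedComponentIn (f ⁻¹' Icc a b) p ≠ connectedComponentIn (f ⁻¹' Icc a b) q) :
    ∀ᶠ δ in 𝓝[>] 0, ∀ S ⊆ f ⁻¹' Icc (a - δ) (b + δ), IsPreconnected S →
      (S ∩ connectedComponentIn (f ⁻¹' Icc a b) p).Nonempty →
      Disjoint S (connectedComponentIn (f ⁻¹' Icc a b) q) := by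
  have hF : ∀ δ : ℝ, IsCompact (f ⁻¹' Icc (a - δ) (b + δ)) := fun δ =>
    (isClosed_Icc.preimage hf).isCompact
  obtain ⟨δ₀, hδ₀, hq⟩ : ∃ δ₀ > 0, q ∉ connectedComponentIn (f ⁻¹' Icc (a - δ₀) (b + δ₀)) p := by
    by_contra! h
    refine hpq (connectedComponentIn_eq ?_)
    rw [← iInter_Icc_sub_add, preimage_iInter]
    refine mem_connectedComponentIn_iInter (F := fun δ : Ioi (0 : ℝ) => f ⁻¹' Icc (a - δ) (b + δ))
      (fun δ₁ δ₂ => ?_) (fun δ => hF δ) fun δ => h δ δ.2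
    have h₁ := min_le_left (δ₁ : ℝ) δ₂
    have h₂ := min_le_right (δ₁ : ℝ) δ₂
    refine ⟨⟨min δ₁ δ₂, lt_min (mem_Ioi.1 δ₁.2) (mem_Ioi.1 δ₂.2)⟩, ?_, ?_⟩ <;>
      exact preimage_mono (Icc_subset_Icc (by linarith) (by linarith))
  filter_upwards [Ioo_mem_nhdsGT hδ₀] with δ hδ S hS hSc ⟨s, hsS, hsp⟩
  set F := f ⁻¹' Icc (a - δ₀) (b + δ₀)
  have hsubF : f ⁻¹' Icc a b ⊆ F := preimage_mono (Icc_subset_Icc (by linarith) (by linarith))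
  have hSF : S ⊆ F :=
    hS.trans (preimage_mono (Icc_subset_Icc (by linarith [hδ.2]) (by linarith [hδ.2])))
  have hSp : S ⊆ connectedComponentIn F p := by
    rw [connectedComponentIn_eq (connectedComponentIn_mono p hsubF hsp)]
    exact hSc.subset_connectedComponentIn hsS hSF
  refine disjoint_left.2 fun z hzS hzq => hq ?_
  have hzq' := connectedComponentIn_mono q hsubF hzq
  rw [connectedComponentIn_eq (hSp hzS), ← connectedComponentIn_eq hzq']
  exact mem_connectedComponentIn (hsubF (connectedComponentIn_nonempty_iff.1 ⟨z, hzq⟩))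

theorem exists_connectedComponentIn_preimage_Icc_of_abs_sub_le (hf : Continuous f)
    (hg : Continuous g) {ε a b a' b' : ℝ} (hfg : ∀ z, |g z - f z| ≤ ε) (ha : |a' - a| ≤ ε)
    (hb : |b' - b| ≤ ε) {p : X} (hε : 2 * ε < diam (f '' connectedComponentIn (f ⁻¹' Icc a b) p)) :
    ∃ q ∈ connectedComponentIn (f ⁻¹' Icc a b) p, q ∈ g ⁻¹' Icc a' b' ∧
      diam (f '' connectedComponentIn (f ⁻¹' Icc a b) p) - 2 * ε ≤
        diam (g '' connectedComponentIn (g ⁻¹' Icc a' b') q) := by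
  set e := connectedComponentIn (f ⁻¹' Icc a b) p
  have he : IsCompact e := (isClosed_connectedComponentIn (isClosed_Icc.preimage hf) p).isCompact
  have hne : e.Nonempty := nonempty_iff_ne_empty.2 fun h => by
    rw [h, image_empty, diam_empty] at hε
    linarith [(abs_nonneg _).trans ha]
  obtain ⟨P₀, hP₀, hmin⟩ := he.exists_isMinOn hne hf.continuousOn
  obtain ⟨P₁, hP₁, hmax⟩ := he.exists_isMaxOn hne hf.continuousOn
  have hdiam : diam (f '' e) ≤ f P₁ - f P₀ := by
    refine diam_le_of_forall_dist_le (by linarith [isMaxOn_iff.1 hmax P₀ hP₀]) ?_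
    rintro _ ⟨u, hu, rfl⟩ _ ⟨v, hv, rfl⟩
    rw [Real.dist_eq, abs_le]
    constructor <;> linarith [isMinOn_iff.1 hmin u hu, isMinOn_iff.1 hmin v hv,
      isMaxOn_iff.1 hmax u hu, isMaxOn_iff.1 hmax v hv]
  have he_sub : e ⊆ f ⁻¹' Icc a b := connectedComponentIn_subset _ _
  obtain ⟨L, hLe, hL, hgL⟩ := isPreconnected_connectedComponentIn.exists_isPreconnected_image_eq_Icc
    he hg.continuousOn (c := f P₀ + ε) (d := f P₁ - ε) (by linarith) hP₀ hP₁
    (by linarith [(abs_le.1 (hfg P₀)).2]) (by linarith [(abs_le.1 (hfg P₁)).1])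
  have hLI : L ⊆ g ⁻¹' Icc a' b' := by
    intro z hz
    have hz' : g z ∈ Icc (f P₀ + ε) (f P₁ - ε) := hgL ▸ mem_image_of_mem g hz
    exact ⟨by linarith [hz'.1, (he_sub hP₀).1, (abs_le.1 ha).2],
      by linarith [hz'.2, (he_sub hP₁).2, (abs_le.1 hb).1]⟩
  obtain ⟨q, hqL, hq⟩ : f P₀ + ε ∈ g '' L := hgL ▸ left_mem_Icc.2 (by linarith)
  obtain ⟨q', hq'L, hq'⟩ : f P₁ - ε ∈ g '' L := hgL ▸ right_mem_Icc.2 (by linarith)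
  have hLC := hL.subset_connectedComponentIn hqL hLI
  refine ⟨q, hLe hqL, hLI hqL, ?_⟩
  have hbdd : Bornology.IsBounded (g '' connectedComponentIn (g ⁻¹' Icc a' b') q) :=
    (isBounded_Icc a' b').subset (image_subset_iff.2 (connectedComponentIn_subset _ _))
  have := dist_le_diam_of_mem hbdd (mem_image_of_mem g (hLC hqL)) (mem_image_of_mem g (hLC hq'L))
  rw [hq, hq', Real.dist_eq, abs_sub_comm, abs_of_nonneg (by linarith)] at this
  linarith

end LevelSets

section Strips

open Complex

theorem projPerp_eq_im (t : ℝ) (z : ℂ) :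
    projPerp t z = (z * exp (-(t * Real.pi * I))).im := by
  have h : -((t + 1 / 2) * Real.pi * I) = -(t * Real.pi * I) + -(Real.pi / 2) * I := by ring
  have hI : exp (-(Real.pi / 2) * I) = -I := by
    rw [exp_mul_I, ← ofReal_ofNat, ← ofReal_div, ← ofReal_neg, ← ofReal_cos, ← ofReal_sin,
      Real.cos_neg, Real.sin_neg, Real.cos_pi_div_two, Real.sin_pi_div_two]
    simp
  rw [projPerp, h, exp_add, hI, ← mul_assoc]
  simp [mul_re, mul_im]

theorem continuous_projPerp : Continuous fun q : ℝ × ℂ => projPerp q.1 q.2 := by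
  unfold projPerp
  fun_prop

theorem projPerp_ofReal_mul_exp_mul (x t μ : ℝ) (w : ℂ) :
    projPerp t (μ * exp (t * Real.pi * I) * (w + x * I)) = μ * (w.im + x) := by
  have h : exp (t * Real.pi * I) * exp (-(t * Real.pi * I)) = 1 := by
    rw [← exp_add, add_neg_cancel, exp_zero]
  rw [projPerp_eq_im, mul_right_comm, mul_assoc (μ : ℂ), h, mul_one]
  simp

theorem Strip_eq_preimage {x t μ : ℝ} (hμ : 0 < μ) (j : ℤ) :
    Strip x t μ j = projPerp t ⁻¹' Icc (μ * (j + x)) (μ * (j + x) + μ) := by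
  set φ : ℂ → ℂ := fun w => μ * exp (t * Real.pi * I) * (w + x * I)
  have hμ' : (μ : ℂ) ≠ 0 := ofReal_ne_zero.2 hμ.ne'
  have hφ : Function.Surjective φ := fun z =>
    ⟨z / (μ * exp (t * Real.pi * I)) - x * I, by simp [φ]; field_simp⟩
  have hS : hStrip j = φ ⁻¹' (projPerp t ⁻¹' Icc (μ * (j + x)) (μ * (j + x) + μ)) := by
    ext w
    simp only [hStrip, mem_ofPred_eq, mem_preimage, φ, projPerp_ofReal_mul_exp_mul, mem_Icc]
    constructor <;> rintro ⟨h₁, h₂⟩ <;> constructor <;> nlinarith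
  rw [Strip, hS, image_preimage_eq _ hφ]

theorem continuous_projPerp_comp {X : Type*} [TopologicalSpace X] {γ : X → ℂ}
    (hγ : Continuous γ) (t : ℝ) : Continuous (projPerp t ∘ γ) :=
  continuous_projPerp.comp (continuous_const.prodMk hγ)

theorem eventually_abs_projPerp_comp_sub_le {X : Type*} [TopologicalSpace X] [CompactSpace X]
    {γ : X → ℂ} (hγ : Continuous γ) (t : ℝ) {ε : ℝ} (hε : 0 < ε) :
    ∀ᶠ s in 𝓝 t, ∀ z, |(projPerp s ∘ γ) z - (projPerp t ∘ γ) z| ≤ ε := by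
  let F : C(ℝ × X, ℝ) := ⟨fun q => projPerp q.1 (γ q.2),
    continuous_projPerp.comp (continuous_fst.prodMk (hγ.comp continuous_snd))⟩
  have hF := ContinuousMap.tendsto_iff_tendstoUniformly.1 (F.curry.continuous.tendsto t)
  filter_upwards [Metric.tendstoUniformly_iff.1 hF ε hε] with s hs z
  rw [abs_sub_comm, ← Real.dist_eq]
  exact (hs z).le

theorem preimage_Strip {X : Type*} (γ : X → ℂ) {x t μ : ℝ} (hμ : 0 < μ) (j : ℤ) :
    γ ⁻¹' Strip x t μ j = (projPerp t ∘ γ) ⁻¹' Icc (μ * (j + x)) (μ * (j + x) + μ) := by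
  rw [Strip_eq_preimage hμ, preimage_comp]

theorem normT_image_eq_diam {X : Type*} (t : ℝ) (γ : X → ℂ) (C : Set X) :
    normT t (γ '' C) = diam ((projPerp t ∘ γ) '' C) := by
  rw [normT, image_comp]

end Strips

section StripComponents

variable {X : Type*} [TopologicalSpace X] {γ : X → ℂ} {x t μ : ℝ}

theorem projPerp_image_Strip_inter_subsingleton (hμ : 0 < μ) {j k : ℤ} (hjk : j ≠ k) :
    (projPerp t '' (Strip x t μ j ∩ Strip x t μ k)).Subsingleton := by
  wlog hlt : j < k generalizing j k
  · simpa only [inter_comm] using this hjk.symm (hjk.symm.lt_of_le (not_lt.1 hlt))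
  have hjk' : (j : ℝ) + 1 ≤ k := by exact_mod_cast hlt
  refine (subsingleton_singleton (a := μ * (k + x))).anti ?_
  rw [Strip_eq_preimage hμ, Strip_eq_preimage hμ, ← preimage_inter]
  rintro _ ⟨z, ⟨⟨-, h₁⟩, h₂, -⟩, rfl⟩
  exact le_antisymm (by nlinarith) h₂

theorem exists_projPerp_image_subset_of_mem_stripComponents (hμ : 0 < μ) {C : Set X}
    (hC : C ∈ stripComponents γ x t μ) :
    ∃ j : ℤ, projPerp t '' (γ '' C) ⊆ Icc (μ * (j + x)) (μ * (j + x) + μ) := by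
  obtain ⟨j, p, -, rfl⟩ := hC
  refine ⟨j, image_subset_iff.2 (image_subset_iff.2 ?_)⟩
  rw [← preimage_comp, ← preimage_Strip γ hμ]
  exact connectedComponentIn_subset _ _

theorem normT_le_of_mem_ndComponents (hμ : 0 < μ) {C : Set X}
    (hC : C ∈ ndComponents γ x t μ) : normT t (γ '' C) ≤ μ := by
  obtain ⟨j, hj⟩ := exists_projPerp_image_subset_of_mem_stripComponents hμ hC.1
  calc normT t (γ '' C) ≤ diam (Icc (μ * (j + x)) (μ * (j + x) + μ)) :=
        diam_mono hj (isBounded_Icc _ _)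
    _ = μ := by rw [Real.diam_Icc (by linarith)]; ring

theorem normT_pos_of_mem_ndComponents (hμ : 0 < μ) {C : Set X}
    (hC : C ∈ ndComponents γ x t μ) : 0 < normT t (γ '' C) := by
  obtain ⟨j, hj⟩ := exists_projPerp_image_subset_of_mem_stripComponents hμ hC.1
  exact diam_pos hC.2 (isBounded_Icc _ _ |>.subset hj)

end StripComponents

section LfnBounds

variable {X : Type*} [TopologicalSpace X] {γ : X → ℂ} {x t μ : ℝ}

theorem sum_normT_le_two_mul (hμ : 0 < μ) {N : ℕ} {e : Fin N → Set X}
    (he : ∀ n, e n ∈ ndComponents γ x t μ) :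
    ∑ n : Fin N, normT t (γ '' e n) / 2 ^ (n : ℕ) ≤ 2 * μ := by
  calc ∑ n : Fin N, normT t (γ '' e n) / 2 ^ (n : ℕ)
      ≤ ∑ n : Fin N, μ * (1 / 2) ^ (n : ℕ) := by
        gcongr with n
        rw [one_div_pow, mul_one_div]
        gcongr
        exact normT_le_of_mem_ndComponents hμ (he n)
    _ = μ * ∑ n ∈ Finset.range N, (1 / 2 : ℝ) ^ n := by
        rw [← Finset.mul_sum, Fin.sum_univ_eq_sum_range (fun n => (1 / 2 : ℝ) ^ n)]
    _ ≤ μ * 2 := by gcongr; exact sum_geometric_two_le N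
    _ = 2 * μ := mul_comm _ _

theorem Lfn_le_iff (hμ : 0 < μ) {c : ℝ} :
    Lfn γ x t μ ≤ c ↔ ∀ (N : ℕ) (e : Fin N → Set X), Function.Injective e →
      (∀ n, e n ∈ ndComponents γ x t μ) → ∑ n : Fin N, normT t (γ '' e n) / 2 ^ (n : ℕ) ≤ c := by
  rw [Lfn, csSup_le_iff]
  · constructor
    · exact fun h N e he hnd => h _ ⟨N, e, he, hnd, rfl⟩
    · rintro h _ ⟨N, e, he, hnd, rfl⟩
      exact h N e he hnd
  · exact ⟨2 * μ, by rintro _ ⟨N, e, -, hnd, rfl⟩; exact sum_normT_le_two_mul hμ hnd⟩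
  · exact ⟨0, 0, Fin.elim0, fun n => n.elim0, fun n => n.elim0, by simp⟩

theorem sum_normT_le_Lfn (hμ : 0 < μ) {N : ℕ} {e : Fin N → Set X} (he : Function.Injective e)
    (hnd : ∀ n, e n ∈ ndComponents γ x t μ) :
    ∑ n : Fin N, normT t (γ '' e n) / 2 ^ (n : ℕ) ≤ Lfn γ x t μ :=
  (Lfn_le_iff hμ).1 le_rfl N e he hnd

theorem Lfn_nonneg (hμ : 0 < μ) : 0 ≤ Lfn γ x t μ := by
  simpa using sum_normT_le_Lfn (γ := γ) (x := x) (t := t) hμ (e := Fin.elim0)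
    (fun n => n.elim0) fun n => n.elim0

theorem Lfn_le_two_mul (hμ : 0 < μ) : Lfn γ x t μ ≤ 2 * μ :=
  (Lfn_le_iff hμ).2 fun _ _ _ hnd => sum_normT_le_two_mul hμ hnd

theorem exists_lt_sum_normT_of_lt_Lfn (hμ : 0 < μ) {y : ℝ} (hy : y < Lfn γ x t μ) :
    ∃ (N : ℕ) (e : Fin N → Set X), Function.Injective e ∧ (∀ n, e n ∈ ndComponents γ x t μ) ∧
      y < ∑ n : Fin N, normT t (γ '' e n) / 2 ^ (n : ℕ) := by
  by_contra! h
  exact hy.not_ge ((Lfn_le_iff hμ).2 h)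

end LfnBounds

section Perturbation

variable {X : Type*} [TopologicalSpace X] [CompactSpace X] [T2Space X] {γ : X → ℂ} {x t μ : ℝ}

theorem eventually_exists_stripComponent_near (hγ : Continuous γ) (hμ : 0 < μ) (j : ℤ) (p : X)
    {η : ℝ} (hη : 0 < η) (hηC : η < normT t (γ '' connectedComponentIn (γ ⁻¹' Strip x t μ j) p)) :
    ∀ᶠ Q : ℝ × ℝ × ℝ in 𝓝 (x, t, μ), ∃ q ∈ connectedComponentIn (γ ⁻¹' Strip x t μ j) p,
      q ∈ γ ⁻¹' Strip Q.1 Q.2.1 Q.2.2 j ∧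
      (projPerp Q.2.1 '' (γ '' connectedComponentIn (γ ⁻¹' Strip Q.1 Q.2.1 Q.2.2 j) q)).Nontrivial ∧
      normT t (γ '' connectedComponentIn (γ ⁻¹' Strip x t μ j) p) - η ≤
        normT Q.2.1 (γ '' connectedComponentIn (γ ⁻¹' Strip Q.1 Q.2.1 Q.2.2 j) q) ∧
      connectedComponentIn (γ ⁻¹' Strip Q.1 Q.2.1 Q.2.2 j) q ⊆
        (projPerp t ∘ γ) ⁻¹' Icc (μ * (j + x) - η) (μ * (j + x) + μ + η) := by
  have hε : 0 < η / 2 := half_pos hη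
  have hnear : ∀ h : ℝ × ℝ × ℝ → ℝ, Continuous h →
      ∀ᶠ Q in 𝓝 (x, t, μ), |h Q - h (x, t, μ)| ≤ η / 2 := fun h hh =>
    (Metric.tendsto_nhds.1 (hh.tendsto _) _ hε).mono fun _ hQ => hQ.le
  filter_upwards [(continuous_snd.fst.tendsto _).eventually
      (eventually_abs_projPerp_comp_sub_le hγ t hε),
    hnear (fun Q => Q.2.2 * (j + Q.1)) (by fun_prop),
    hnear (fun Q => Q.2.2 * (j + Q.1) + Q.2.2) (by fun_prop),
    (continuous_snd.snd.tendsto _).eventually (lt_mem_nhds hμ)]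
    with ⟨x', t', μ'⟩ hf ha hb hμ'
  dsimp only at hf ha hb hμ' ⊢
  simp only [preimage_Strip γ hμ, preimage_Strip γ hμ', normT_image_eq_diam] at hηC ⊢
  obtain ⟨q, hqe, hq, hdiam⟩ := exists_connectedComponentIn_preimage_Icc_of_abs_sub_le
    (continuous_projPerp_comp hγ t) (continuous_projPerp_comp hγ t') hf ha hb (p := p) (by linarith)
  refine ⟨q, hqe, hq, ?_, by linarith, fun z hz => ?_⟩
  · rw [← image_comp, ← not_subsingleton_iff]
    intro hsub
    rw [diam_subsingleton hsub] at hdiam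
    linarith
  · have hz' := connectedComponentIn_subset _ _ hz
    have := abs_le.1 (hf z)
    exact ⟨by linarith [hz'.1, (abs_le.1 ha).1], by linarith [hz'.2, (abs_le.1 hb).2]⟩

theorem eventually_disjoint_stripComponents (hγ : Continuous γ) (hμ : 0 < μ) {N : ℕ}
    {e : Fin N → Set X} (he : Function.Injective e) {j : Fin N → ℤ} {p : Fin N → X}
    (hep : ∀ n, e n = connectedComponentIn (γ ⁻¹' Strip x t μ (j n)) (p n)) :
    ∀ᶠ η in 𝓝[>] 0, ∀ n m, n ≠ m → j n = j m →
      ∀ S ⊆ (projPerp t ∘ γ) ⁻¹' Icc (μ * (j n + x) - η) (μ * (j n + x) + μ + η),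
        IsPreconnected S → (S ∩ e n).Nonempty → Disjoint S (e m) := by
  refine eventually_all.2 fun n => eventually_all.2 fun m => ?_
  by_cases hnm : n ≠ m ∧ j n = j m
  · have hne := he.ne hnm.1
    rw [hep n, hep m, ← hnm.2, preimage_Strip γ hμ] at hne
    filter_upwards [eventually_disjoint_connectedComponentIn_preimage_Icc
      (continuous_projPerp_comp hγ t) hne] with η hη _ _
    rw [hep n, hep m, ← hnm.2, preimage_Strip γ hμ]
    exact hη
  · exact .of_forall fun _ h₁ h₂ => (hnm ⟨h₁, h₂⟩).elim

end Perturbation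

section Main

variable {X : Type*} [TopologicalSpace X] [CompactSpace X] [T2Space X] {γ : X → ℂ}

theorem Lfn_lowerSemicontinuousAt (hγ : Continuous γ) {x t μ : ℝ} (hμ : 0 < μ) :
    LowerSemicontinuousAt (fun P : ℝ × ℝ × ℝ => Lfn γ P.1 P.2.1 P.2.2) (x, t, μ) := by
  intro y (hy : y < Lfn γ x t μ)
  obtain ⟨N, e, he, hnd, hy⟩ := exists_lt_sum_normT_of_lt_Lfn hμ hy
  choose j p _ hep using fun n => (hnd n).1
  have hsmall : ∀ᶠ η in 𝓝 (0 : ℝ), (∀ n, η < normT t (γ '' e n)) ∧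
      y < ∑ n : Fin N, (normT t (γ '' e n) - η) / 2 ^ (n : ℕ) := by
    refine (eventually_all.2 fun n => ?_).and ((Continuous.tendsto ?_ 0).eventually
      (lt_mem_nhds ?_))
    · exact gt_mem_nhds (normT_pos_of_mem_ndComponents hμ (hnd n))
    · fun_prop
    · simpa using hy
  obtain ⟨η, ⟨⟨hηe, hηy⟩, hηsep⟩, hη₀⟩ := ((hsmall.filter_mono nhdsWithin_le_nhds).and
    (eventually_disjoint_stripComponents hγ hμ he hep) |>.and self_mem_nhdsWithin).exists
  filter_upwards [eventually_all.2 fun n => eventually_exists_stripComponent_near hγ hμ (j n) (p n)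
      hη₀ (hep n ▸ hηe n), (continuous_snd.snd.tendsto _).eventually (lt_mem_nhds hμ)]
    with Q hQ hQμ
  choose q hqe hq hnt hnorm hsub using hQ
  set C' := fun n => connectedComponentIn (γ ⁻¹' Strip Q.1 Q.2.1 Q.2.2 (j n)) (q n)
  have hC'inj : Function.Injective C' := by
    intro n m hnm
    by_contra hne
    rcases eq_or_ne (j n) (j m) with hj | hj
    · refine disjoint_left.1 (hηsep n m hne hj _ (hsub n) isPreconnected_connectedComponentIn
        ⟨q n, mem_connectedComponentIn (hq n), hep n ▸ hqe n⟩) ?_ (hep m ▸ hqe m)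
      change q m ∈ C' n
      rw [hnm]
      exact mem_connectedComponentIn (hq m)
    · have hCS : γ '' C' n ⊆ Strip Q.1 Q.2.1 Q.2.2 (j n) ∩ Strip Q.1 Q.2.1 Q.2.2 (j m) :=
        image_subset_iff.2 fun z hz => ⟨connectedComponentIn_subset (γ ⁻¹' _) _ hz,
          connectedComponentIn_subset (γ ⁻¹' _) _ (hnm ▸ hz : z ∈ C' m)⟩
      exact (hnt n).not_subsingleton
        ((projPerp_image_Strip_inter_subsingleton hQμ hj).anti (image_mono hCS))
  refine hηy.trans_le (le_trans (Finset.sum_le_sum fun n _ => ?_)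
    (sum_normT_le_Lfn hQμ hC'inj fun n => ⟨⟨j n, q n, hq n, rfl⟩, hnt n⟩))
  gcongr
  rw [hep n]
  exact hnorm n

end Main

theorem Lfn_lowerSemicontinuousOn_general
    {X : Type*} [MetricSpace X] [CompactSpace X]
    (γ : X → ℂ) (hγ : Continuous γ) :
    LowerSemicontinuousOn (fun P : ℝ × ℝ × ℝ => Lfn γ P.1 P.2.1 P.2.2)
      (Icc (0:ℝ) 1 ×ˢ Icc (0:ℝ) 1 ×ˢ Ioc (0:ℝ) 1) ∧
    IntegrableOn (fun P : ℝ × ℝ × ℝ => Lfn γ P.1 P.2.1 P.2.2)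
      (Icc (0:ℝ) 1 ×ˢ Icc (0:ℝ) 1 ×ˢ Ioc (0:ℝ) 1) volume := by
  have hlsc : LowerSemicontinuousOn (fun P : ℝ × ℝ × ℝ => Lfn γ P.1 P.2.1 P.2.2)
      (Icc (0:ℝ) 1 ×ˢ Icc (0:ℝ) 1 ×ˢ Ioc (0:ℝ) 1) := fun P hP =>
    (Lfn_lowerSemicontinuousAt hγ hP.2.2.1).lowerSemicontinuousWithinAt _
  refine ⟨hlsc, hlsc.integrableOn_of_bounded
    (measurableSet_Icc.prod (measurableSet_Icc.prod measurableSet_Ioc)) ?_ (M := 2) ?_⟩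
  · exact (isBounded_Icc 0 1 |>.prod (isBounded_Icc 0 1 |>.prod (isBounded_Ioc 0 1)))
      |>.measure_lt_top.ne
  · rintro P ⟨-, -, hμ, hμ1⟩
    rw [abs_le]
    constructor <;> linarith [Lfn_nonneg (γ := γ) (x := P.1) (t := P.2.1) hμ,
      Lfn_le_two_mul (γ := γ) (x := P.1) (t := P.2.1) hμ]

/-- **Lemma 2.3.** For a fixed generalized path `γ : X → ℂ`, the function
`(x,t,μ) ↦ L^{x,t,μ}(γ)` is lower semicontinuous on `[0,1] × [0,1] × (0,1]`, hence Borel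
measurable and (Lebesgue) integrable there. -/
theorem Lfn_lowerSemicontinuousOn
    {X : Type*} [MetricSpace X] [CompactSpace X] [ConnectedSpace X] [LocallyConnectedSpace X]
    (γ : X → ℂ) (hγ : Continuous γ) :
    LowerSemicontinuousOn (fun P : ℝ × ℝ × ℝ => Lfn γ P.1 P.2.1 P.2.2)
      (Icc (0:ℝ) 1 ×ˢ Icc (0:ℝ) 1 ×ˢ Ioc (0:ℝ) 1) ∧
    IntegrableOn (fun P : ℝ × ℝ × ℝ => Lfn γ P.1 P.2.1 P.2.2)
      (Icc (0:ℝ) 1 ×ˢ Icc (0:ℝ) 1 ×ˢ Ioc (0:ℝ) 1) volume :=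
  Lfn_lowerSemicontinuousOn_general γ hγ
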